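/- arXiv:1101.3160 — 2 statements merged into one kernel-verified Lean document; each statement's English description precedes it below -/
import Mathlib

section
/- Define cubics s₀,s₁,s₂,s₃ in ℂ[u₀,u₁,u₂] depending on a parameter λ ∈ ℂ by: s₀ = -½(u₀-λu₁)(u₁-u₂)(u₂-λu₀), s₁ = (1-λ)u₀(u₁-u₂)(λu₁-u₂) - s₀, s₂ = (1-λ)u₁(u₂-u₀)(u₂-λu₀) - s₀, s₃ = (1-λ)u₂(u₀-u₁)(u₀-λu₁) - s₀. Then the polynomial identity (λ+1)²(s₁-s₀)(s₂-s₀)(s₃-s₀) = -2λ·s₀·(s₁+s₂+s₃-s₀)² holds in ℂ[u₀,u₁,u₂]. -/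
open MvPolynomial

noncomputable section

/-- The cubic `s₀ = -½(u₀-λu₁)(u₁-u₂)(u₂-λu₀)`. -/
def s0 (l : ℂ) : MvPolynomial (Fin 3) ℂ :=
  -(C (1/2 : ℂ)) * (X 0 - C l * X 1) * (X 1 - X 2) * (X 2 - C l * X 0)

/-- The cubic `s₁ = (1-λ)u₀(u₁-u₂)(λu₁-u₂) - s₀`. -/
def s1 (l : ℂ) : MvPolynomial (Fin 3) ℂ :=
  C (1 - l) * X 0 * (X 1 - X 2) * (C l * X 1 - X 2) - s0 l

/-- The cubic `s₂ = (1-λ)u₁(u₂-u₀)(u₂-λu₀) - s₀`. -/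
def s2 (l : ℂ) : MvPolynomial (Fin 3) ℂ :=
  C (1 - l) * X 1 * (X 2 - X 0) * (X 2 - C l * X 0) - s0 l

/-- The cubic `s₃ = (1-λ)u₂(u₀-u₁)(u₀-λu₁) - s₀`. -/
def s3 (l : ℂ) : MvPolynomial (Fin 3) ℂ :=
  C (1 - l) * X 2 * (X 0 - X 1) * (X 0 - C l * X 1) - s0 l

/-!
Each difference `sᵢ - s₀` factors into linear forms, and so does `s₁ + s₂ + s₃ - s₀`, namely
as `(λ+1)·q` with `q = (u₀-u₁)(u₀-u₂)(u₂-λu₁)`. Comparing the factors, the product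
`(s₁-s₀)(s₂-s₀)(s₃-s₀)` equals `-2λ·s₀·q²`, and multiplying by `(λ+1)²` gives the identity.
-/

theorem two_mul_s0 (l : ℂ) :
    2 * s0 l = -((X 0 - C l * X 1) * (X 1 - X 2) * (X 2 - C l * X 0)) := by
  have two_mul_half : (2 : MvPolynomial (Fin 3) ℂ) * C (1 / 2) = 1 := by
    rw [← map_ofNat C 2, ← map_mul]
    norm_num
  rw [s0]
  linear_combination (-((X 0 - C l * X 1) * (X 1 - X 2) * (X 2 - C l * X 0))) * two_mul_half

theorem s1_sub_s0 (l : ℂ) :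
    s1 l - s0 l = C l * (X 0 - X 1) * (X 1 - X 2) * (X 2 - X 0) := by
  rw [s1, map_sub, map_one]
  linear_combination -two_mul_s0 l

theorem s2_sub_s0 (l : ℂ) :
    s2 l - s0 l = (X 1 - X 0) * (X 2 - C l * X 0) * (X 2 - C l * X 1) := by
  rw [s2, map_sub, map_one]
  linear_combination -two_mul_s0 l

theorem s3_sub_s0 (l : ℂ) :
    s3 l - s0 l = (X 0 - X 2) * (X 0 - C l * X 1) * (X 2 - C l * X 1) := by
  rw [s3, map_sub, map_one]
  linear_combination -two_mul_s0 l

theorem s1_add_s2_add_s3_sub_s0 (l : ℂ) :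
    s1 l + s2 l + s3 l - s0 l =
      C (l + 1) * ((X 0 - X 1) * (X 0 - X 2) * (X 2 - C l * X 1)) := by
  rw [map_add, map_one]
  linear_combination s1_sub_s0 l + s2_sub_s0 l + s3_sub_s0 l + two_mul_s0 l

theorem s1_sub_s0_mul_s2_sub_s0_mul_s3_sub_s0 (l : ℂ) :
    (s1 l - s0 l) * (s2 l - s0 l) * (s3 l - s0 l) =
      -C (2 * l) * s0 l * ((X 0 - X 1) * (X 0 - X 2) * (X 2 - C l * X 1)) ^ 2 := by
  rw [s1_sub_s0, s2_sub_s0, s3_sub_s0, map_mul, map_ofNat]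
  linear_combination
    (C l * (X 0 - X 1) ^ 2 * (X 0 - X 2) ^ 2 * (X 2 - C l * X 1) ^ 2) * two_mul_s0 l

/-- The identity `(λ+1)²(s₁-s₀)(s₂-s₀)(s₃-s₀) = -2λ·s₀·(s₁+s₂+s₃-s₀)²`
in `ℂ[u₀,u₁,u₂]`. -/
theorem stmt10 (l : ℂ) :
    C ((l + 1) ^ 2) * (s1 l - s0 l) * (s2 l - s0 l) * (s3 l - s0 l) =
      -(C (2 * l)) * s0 l * (s1 l + s2 l + s3 l - s0 l) ^ 2 := by
  rw [s1_add_s2_add_s3_sub_s0, map_pow]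
  linear_combination C (l + 1) ^ 2 * s1_sub_s0_mul_s2_sub_s0_mul_s3_sub_s0 l
end
end

section
/- In the quotient ring ℂ[x₀₀,...,x₃₁, y_{abcd} : (a,b,c,d) ∈ L] modulo the ideal generated by the quadrics x₀₀x₀₁ = x₁₀x₁₁ = x₂₀x₂₁ = x₃₀x₃₁ and the cubic relations y_{abcd}x_{0a} = x_{1b'}x_{2c'}x_{3d'} (and the three analogous ones per (a,b,c,d) ∈ L), the element x₀₀·(y₀₀₀₀y₁₁₀₀ - x₂₁²x₃₁²) lies in the ideal generated by the listed quadric and cubic relations. -/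
open MvPolynomial

noncomputable section

/-- The polynomial ring `ℂ[x₀₀,…,x₃₁, y₀₀₀₀, y₁₁₀₀]`: the `x` variables are
indexed by `Sum.inl (i,a)`, and `y₀₀₀₀ = Sum.inr 0`, `y₁₁₀₀ = Sum.inr 1`. -/
abbrev R19 : Type := MvPolynomial ((Fin 4 × Fin 2) ⊕ Fin 2) ℂ

/-- The variable `x_{ia}`. -/
def xv (i : Fin 4) (a : Fin 2) : R19 := X (Sum.inl (i, a))

/-- The variables `y₀₀₀₀` (`k = 0`) and `y₁₁₀₀` (`k = 1`). -/
def yv (k : Fin 2) : R19 := X (Sum.inr k)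

/-- The ideal `J₀` generated by the quadric relations and the cubic
unprojection relations involving `y₀₀₀₀` and `y₁₁₀₀`. -/
def J0 : Ideal R19 :=
  Ideal.span
    { xv 0 0 * xv 0 1 - xv 1 0 * xv 1 1,
      xv 1 0 * xv 1 1 - xv 2 0 * xv 2 1,
      xv 2 0 * xv 2 1 - xv 3 0 * xv 3 1,
      yv 0 * xv 0 0 - xv 1 1 * xv 2 1 * xv 3 1,
      yv 0 * xv 1 0 - xv 0 1 * xv 2 1 * xv 3 1,
      yv 0 * xv 2 0 - xv 0 1 * xv 1 1 * xv 3 1,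
      yv 0 * xv 3 0 - xv 0 1 * xv 1 1 * xv 2 1,
      yv 1 * xv 0 1 - xv 1 0 * xv 2 1 * xv 3 1,
      yv 1 * xv 1 1 - xv 0 0 * xv 2 1 * xv 3 1,
      yv 1 * xv 2 0 - xv 0 0 * xv 1 0 * xv 3 1,
      yv 1 * xv 3 0 - xv 0 0 * xv 1 0 * xv 2 1 }

/-- The quartic unprojection relation `y₀₀₀₀y₁₁₀₀ - x₂₁²x₃₁²` is a consequence
of the quadric and cubic relations after multiplying by `x₀₀`:
`x₀₀·(y₀₀₀₀y₁₁₀₀ - x₂₁²x₃₁²) ∈ J₀`. -/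
theorem stmt19 : xv 0 0 * (yv 0 * yv 1 - xv 2 1 ^ 2 * xv 3 1 ^ 2) ∈ J0 := by
  have h4 : yv 0 * xv 0 0 - xv 1 1 * xv 2 1 * xv 3 1 ∈ J0 :=
    Ideal.subset_span (by simp [Set.mem_insert_iff])
  have h9 : yv 1 * xv 1 1 - xv 0 0 * xv 2 1 * xv 3 1 ∈ J0 :=
    Ideal.subset_span (by simp [Set.mem_insert_iff])
  have := J0.add_mem (J0.mul_mem_left (yv 1) h4)
    (J0.mul_mem_left (xv 2 1 * xv 3 1) h9)
  convert this using 1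
  ring
end
end
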